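/- Timeline invariant, part 2: for any combined-machine configuration reachable from an initial configuration, whenever the soup contains two adjacent entries (n, K_P) followed by (n', K'_{P'}), it holds that P' = next(P). -/

import Mathlib

/-- Terms: variables, numerals, successor, let-bindings, and binary choice. -/
inductive Tm : Type
  | var : String → Tm
  | num : ℕ → Tm
  | suc : Tm → Tm
  | lett : String → Tm → Tm → Tm
  | choose : Tm → Tm → Tm
deriving DecidableEq

/-- Substitution of a numeral for a variable. -/
def Tm.subst (x : String) (n : ℕ) : Tm → Tm
  | .var y => if y = x then .num n else .var y
  | .num m => .num m
  | .suc t => .suc (t.subst x n)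
  | .lett y t u => .lett y (t.subst x n) (if y = x then u else u.subst x n)
  | .choose a b => .choose (a.subst x n) (b.subst x n)

/-- Machine continuations: halt, successor frame, and let frame. -/
inductive Kont : Type
  | halt : Kont
  | suc : Kont → Kont
  | lett : String → Tm → Kont → Kont
deriving DecidableEq

/-- A choice `i ∈ {1, 2}` is encoded as a `Bool`: `false` is choice 1, `true` is choice 2.
A history is a list of choices; `P·i` is `P ++ [i]`. -/
abbrev Hist : Type := List Bool

/-- Successor on reversed histories: `next(P·1) = P·2`, `next(P·2) = next(P)`. -/
def nextRev : List Bool → Option (List Bool)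
  | [] => none
  | false :: P => some (true :: P)
  | true :: P => nextRev P

/-- The successor function `next` on histories (`none` when undefined). -/
def nextHist (P : Hist) : Option Hist := (nextRev P.reverse).map List.reverse

/-- Combined-machine configurations `(t, K_P, F, s, R)_u`: the current continuation
carries a past history `P`, each soup entry carries its own past history, and the
machine holds a future `F`. -/
structure MCfg : Type where
  tm : Tm
  k : Kont
  past : Hist
  fut : Hist
  soup : List (ℕ × Kont × Hist)
  res : List ℕ
deriving DecidableEq

/-- The reduction relation of the combined machine, for a fixed initial term `u`. -/
inductive MStep (u : Tm) : MCfg → MCfg → Prop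
  | suc (t K P F s R) : MStep u ⟨.suc t, K, P, F, s, R⟩ ⟨t, .suc K, P, F, s, R⟩
  | sucNum (n K P F s R) : MStep u ⟨.num n, .suc K, P, F, s, R⟩ ⟨.num (n + 1), K, P, F, s, R⟩
  | lett (x t t' K P F s R) :
      MStep u ⟨.lett x t t', K, P, F, s, R⟩ ⟨t, .lett x t' K, P, F, s, R⟩
  | lettNum (n x t' K P F s R) :
      MStep u ⟨.num n, .lett x t' K, P, F, s, R⟩ ⟨t'.subst x n, K, P, F, s, R⟩
  | chooseFork (n₁ n₂ K P s R) :
      MStep u ⟨.choose (.num n₁) (.num n₂), K, P, [], s, R⟩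
              ⟨.num n₁, K, P ++ [false], [], (n₂, K, P ++ [true]) :: s, R⟩
  | haltPop (n n' K' P P' s R) :
      MStep u ⟨.num n, .halt, P, [], (n', K', P') :: s, R⟩
              ⟨.num n', K', P', [], s, n :: R⟩
  | chooseFut (n₁ n₂ K P i F s R) :
      MStep u ⟨.choose (.num n₁) (.num n₂), K, P, i :: F, s, R⟩
              ⟨.num (if i then n₂ else n₁), K, P ++ [i], F, s, R⟩

/-- Pure reductions: the subset of combined-machine reductions that do not depend
on the soup or result components (the four successor/let rules, plus the
future-consuming choose rule). -/
inductive PureStep (u : Tm) : MCfg → MCfg → Prop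
  | suc (t K P F s R) : PureStep u ⟨.suc t, K, P, F, s, R⟩ ⟨t, .suc K, P, F, s, R⟩
  | sucNum (n K P F s R) :
      PureStep u ⟨.num n, .suc K, P, F, s, R⟩ ⟨.num (n + 1), K, P, F, s, R⟩
  | lett (x t t' K P F s R) :
      PureStep u ⟨.lett x t t', K, P, F, s, R⟩ ⟨t, .lett x t' K, P, F, s, R⟩
  | lettNum (n x t' K P F s R) :
      PureStep u ⟨.num n, .lett x t' K, P, F, s, R⟩ ⟨t'.subst x n, K, P, F, s, R⟩
  | chooseFut (n₁ n₂ K P i F s R) :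
      PureStep u ⟨.choose (.num n₁) (.num n₂), K, P, i :: F, s, R⟩
              ⟨.num (if i then n₂ else n₁), K, P ++ [i], F, s, R⟩

/-- The initial combined configuration `(u, halt_∅, ∅, ∅, ∅)_u`. -/
def initMCfg (u : Tm) : MCfg := ⟨u, .halt, [], [], [], []⟩

/-- Reachability of a combined configuration from the initial configuration. -/
def MReachable (u : Tm) (c : MCfg) : Prop :=
  Relation.ReflTransGen (MStep u) (initMCfg u) c

/-- Besides the chain condition, the future stays empty: otherwise `chooseFut` could extend the
current history without touching the soup. -/
def TimelineInvariant (c : MCfg) : Prop :=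
  c.fut = [] ∧
    List.IsChain (fun P P' => nextHist P = some P') (c.past :: c.soup.map fun e => e.2.2)

@[simp]
theorem nextHist_append_false (P : Hist) : nextHist (P ++ [false]) = some (P ++ [true]) := by
  simp [nextHist, nextRev]

@[simp]
theorem nextHist_append_true (P : Hist) : nextHist (P ++ [true]) = nextHist P := by
  simp [nextHist, nextRev]

theorem TimelineInvariant.of_mStep {u : Tm} {c c' : MCfg} (hc : TimelineInvariant c)
    (h : MStep u c c') : TimelineInvariant c' := by
  obtain ⟨hfut, hchain⟩ := hc
  cases h with
  | suc | sucNum | lett | lettNum => exact ⟨hfut, hchain⟩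
  | chooseFork n₁ n₂ K P s R =>
    refine ⟨rfl, ?_⟩
    simp only [List.map_cons]
    generalize s.map (fun e => e.2.2) = hists at hchain ⊢
    cases hists with
    | nil => simp
    | cons Q hists => simpa using hchain
  | haltPop => exact ⟨rfl, hchain.tail⟩
  | chooseFut => cases hfut

theorem MReachable.timelineInvariant {u : Tm} {c : MCfg} (h : MReachable u c) :
    TimelineInvariant c := by
  induction h with
  | refl => exact ⟨rfl, List.isChain_singleton _⟩
  | tail _ step ih => exact ih.of_mStep step

/-- Timeline invariant, part 2: in any reachable combined configuration, whenever
the soup contains two adjacent entries `(n, K_P)` and `(n', K'_{P'})`, we have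
`P' = next(P)`. -/
theorem timeline_invariant_part2 (u : Tm) (c : MCfg) (hc : MReachable u c)
    (l₁ l₂ : List (ℕ × Kont × Hist)) (n n' : ℕ) (K K' : Kont) (P P' : Hist)
    (hs : c.soup = l₁ ++ (n, K, P) :: (n', K', P') :: l₂) :
    nextHist P = some P' := by
  have hchain := hc.timelineInvariant.2
  rw [hs, List.map_append, List.map_cons, List.map_cons] at hchain
  exact (List.isChain_cons_append_cons_cons.mp hchain).2.1
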